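/- (Vanishing tail of the potential energy) Let 0 < s < 1 and F satisfy: for every ε > 0 there exist R₀, s₀ > 0 with F(r,t) ≤ ε t² for a.e. r ≥ R₀ and 0 ≤ t < s₀. Let {u_m} be a sequence of nonnegative Schwarz symmetric functions with ‖u_m‖_{L²} = c. Then lim_{R→∞} sup_m ∫_{|x|>R} F(|x|, u_m(x)) dx = 0. -/

import Mathlib

open MeasureTheory

def SchwarzSymmetric {n : ℕ} (v : EuclideanSpace ℝ (Fin n) → ℝ) : Prop :=
  (∀ x y : EuclideanSpace ℝ (Fin n), ‖x‖ = ‖y‖ → v x = v y) ∧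
  (∀ x y : EuclideanSpace ℝ (Fin n), ‖x‖ ≤ ‖y‖ → v y ≤ v x)

/-!
Since `u_m` is radially nonincreasing, `u_m(x)² |B(0,|x|)| ≤ ∫_{B(0,|x|)} u_m² ≤ c²`, so
`u_m(x) < s₀` for `|x| ≥ R`, with `R` independent of `m`. Beyond `max R₀ R` the hypothesis on `F`
then gives `F(|x|, u_m(x)) ≤ ε u_m(x)²` for a.e. `x` (a null set of radii has a null preimage
under the norm), and the tail integral is at most `ε c²`.
-/

open Metric Filter

section Haar

variable {E : Type*} [NormedAddCommGroup E] [NormedSpace ℝ E] [MeasurableSpace E] [BorelSpace E]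
  [FiniteDimensional ℝ E] [Nontrivial E] (μ : Measure E) [μ.IsAddHaarMeasure]

theorem quasiMeasurePreserving_norm_addHaar :
    Measure.QuasiMeasurePreserving (‖·‖ : E → ℝ) μ volume := by
  refine ⟨measurable_norm, Measure.AbsolutelyContinuous.mk fun N hN hN0 => ?_⟩
  rw [Measure.map_apply measurable_norm hN]
  have hIoi : Measure.volumeIoiPow (Module.finrank ℝ E - 1) (Subtype.val ⁻¹' N) = 0 := by
    refine withDensity_absolutelyContinuous _ _ ?_
    rw [(MeasurableEmbedding.subtype_coe measurableSet_Ioi).comap_apply]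
    exact measure_mono_null (Set.image_preimage_subset _ _) hN0
  -- In polar coordinates `μ` on `E ∖ {0}` is `μ.toSphere ⊗ r ^ (d - 1) dr`.
  have hpunctured :
      μ.comap Subtype.val (Subtype.val ⁻¹' ((‖·‖) ⁻¹' N) : Set ({0}ᶜ : Set E)) = 0 := by
    have hpre : (Subtype.val ⁻¹' ((‖·‖) ⁻¹' N) : Set ({0}ᶜ : Set E)) =
        homeomorphUnitSphereProd E ⁻¹' (Set.univ ×ˢ (Subtype.val ⁻¹' N)) := by
      ext x; simp
    rw [hpre, (μ.measurePreserving_homeomorphUnitSphereProd).measure_preimage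
      (MeasurableSet.univ.prod (measurable_subtype_coe hN)).nullMeasurableSet,
      Measure.prod_prod, hIoi, mul_zero]
  rw [comap_subtype_coe_apply (measurableSet_singleton 0).compl, Set.image_preimage_eq_inter_range,
    Subtype.range_coe] at hpunctured
  refine measure_mono_null (fun x hx => ?_) (measure_union_null hpunctured (measure_singleton 0))
  by_cases h : x = 0
  · exact Or.inr h
  · exact Or.inl ⟨hx, h⟩

theorem tendsto_measureReal_ball_atTop :
    Tendsto (fun r => μ.real (ball (0 : E) r)) atTop atTop := by
  have hB : 0 < μ.real (ball (0 : E) 1) :=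
    ENNReal.toReal_pos (measure_ball_pos μ 0 one_pos).ne' measure_ball_lt_top.ne
  refine ((tendsto_pow_atTop (Module.finrank_pos (R := ℝ) (M := E)).ne').atTop_mul_const hB).congr'
    ?_
  filter_upwards [eventually_ge_atTop 0] with r hr
  rw [measureReal_def, measureReal_def, Measure.addHaar_ball μ 0 hr, ENNReal.toReal_mul,
    ENNReal.toReal_ofReal (by positivity)]

end Haar

namespace SchwarzSymmetric

variable {n : ℕ} {v : EuclideanSpace ℝ (Fin n) → ℝ}

theorem sq_mul_measureReal_ball_le (hv : SchwarzSymmetric v) (hv0 : ∀ x, 0 ≤ v x)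
    (hv2 : MemLp v 2) (x : EuclideanSpace ℝ (Fin n)) :
    v x ^ 2 * volume.real (ball (0 : EuclideanSpace ℝ (Fin n)) ‖x‖) ≤ ∫ y, v y ^ 2 := by
  calc v x ^ 2 * volume.real (ball (0 : EuclideanSpace ℝ (Fin n)) ‖x‖)
      = ∫ _ in ball (0 : EuclideanSpace ℝ (Fin n)) ‖x‖, v x ^ 2 := by
        rw [setIntegral_const, smul_eq_mul, mul_comm]
    _ ≤ ∫ y in ball (0 : EuclideanSpace ℝ (Fin n)) ‖x‖, v y ^ 2 := by
        refine setIntegral_mono_on (integrableOn_const measure_ball_lt_top.ne)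
          hv2.integrable_sq.integrableOn measurableSet_ball fun y hy => ?_
        have hyx : ‖y‖ ≤ ‖x‖ := by simpa using (mem_ball.1 hy).le
        exact pow_le_pow_left₀ (hv0 x) (hv.2 y x hyx) 2
    _ ≤ ∫ y, v y ^ 2 :=
        setIntegral_le_integral hv2.integrable_sq (.of_forall fun y => sq_nonneg (v y))

end SchwarzSymmetric

theorem exists_forall_norm_ge_lt_of_schwarzSymmetric {n : ℕ} (hn : 0 < n) (C : ℝ) {δ : ℝ}
    (hδ : 0 < δ) :
    ∃ R : ℝ, ∀ v : EuclideanSpace ℝ (Fin n) → ℝ, SchwarzSymmetric v → (∀ x, 0 ≤ v x) →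
      MemLp v 2 → ∫ y, v y ^ 2 ≤ C → ∀ x, R ≤ ‖x‖ → v x < δ := by
  have : NeZero n := ⟨hn.ne'⟩
  obtain ⟨R, hR⟩ := ((tendsto_measureReal_ball_atTop (volume : Measure (EuclideanSpace ℝ (Fin n))))
    |>.eventually_gt_atTop (C / δ ^ 2)).exists_forall_of_atTop
  refine ⟨R, fun v hv hv0 hv2 hvC x hx => ?_⟩
  have hball : C / δ ^ 2 < volume.real (ball (0 : EuclideanSpace ℝ (Fin n)) ‖x‖) :=
    hR _ hx
  have hsq : v x ^ 2 < δ ^ 2 := by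
    rw [div_lt_iff₀ (by positivity)] at hball
    nlinarith [hv.sq_mul_measureReal_ball_le hv0 hv2 x, hvC, measureReal_nonneg (μ := volume)
      (s := ball (0 : EuclideanSpace ℝ (Fin n)) ‖x‖)]
  exact lt_of_pow_lt_pow_left₀ 2 hδ.le hsq

theorem stmt_17_general (n : ℕ) (hn : 0 < n) (c : ℝ)
    (F : ℝ → ℝ → ℝ)
    (hF3 : ∀ ε : ℝ, 0 < ε → ∃ R₀ s₀ : ℝ, 0 < R₀ ∧ 0 < s₀ ∧
      ∀ᵐ r ∂(volume.restrict (Set.Ici R₀)),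
        ∀ t : ℝ, 0 ≤ t → t < s₀ → F r t ≤ ε * t ^ 2)
    (u : ℕ → EuclideanSpace ℝ (Fin n) → ℝ)
    (hu0 : ∀ m x, 0 ≤ u m x) (husym : ∀ m, SchwarzSymmetric (u m))
    (hu2 : ∀ m, MemLp (u m) 2) (hnorm : ∀ m, ∫ x, (u m x) ^ 2 = c ^ 2) :
    ∀ ε : ℝ, 0 < ε → ∃ R₁ : ℝ, ∀ R : ℝ, R₁ ≤ R → ∀ m : ℕ,
      (∫⁻ x in {x : EuclideanSpace ℝ (Fin n) | R < ‖x‖},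
        ENNReal.ofReal (F ‖x‖ (u m x))) ≤ ENNReal.ofReal ε := by
  intro ε hε
  have : NeZero n := ⟨hn.ne'⟩
  set ε' := ε / (c ^ 2 + 1)
  obtain ⟨R₀, s₀, -, hs₀, hF⟩ := hF3 ε' (by positivity)
  have hFx : ∀ᵐ x : EuclideanSpace ℝ (Fin n), R₀ ≤ ‖x‖ →
      ∀ t, 0 ≤ t → t < s₀ → F ‖x‖ t ≤ ε' * t ^ 2 :=
    (quasiMeasurePreserving_norm_addHaar volume).ae ((ae_restrict_iff' measurableSet_Ici).1 hF)
  obtain ⟨R₂, hsmall⟩ := exists_forall_norm_ge_lt_of_schwarzSymmetric hn (c ^ 2) hs₀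
  refine ⟨max R₀ R₂, fun R hR m => ?_⟩
  calc ∫⁻ x in {x | R < ‖x‖}, ENNReal.ofReal (F ‖x‖ (u m x))
      ≤ ∫⁻ x in {x | R < ‖x‖}, ENNReal.ofReal (ε' * u m x ^ 2) := by
        refine setLIntegral_mono_ae' (measurableSet_lt measurable_const measurable_norm) ?_
        filter_upwards [hFx] with x hx hRx
        have hx₀ : R₀ ≤ ‖x‖ := (le_max_left _ _).trans (hR.trans hRx.le)
        have hx₂ : R₂ ≤ ‖x‖ := (le_max_right _ _).trans (hR.trans hRx.le)
        exact ENNReal.ofReal_le_ofReal (hx hx₀ _ (hu0 m x)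
          (hsmall _ (husym m) (hu0 m) (hu2 m) (hnorm m).le x hx₂))
    _ ≤ ∫⁻ x, ENNReal.ofReal (ε' * u m x ^ 2) := setLIntegral_le_lintegral _ _
    _ = ENNReal.ofReal (ε' * c ^ 2) := by
        rw [← ofReal_integral_eq_lintegral_ofReal ((hu2 m).integrable_sq.const_mul ε')
          (.of_forall fun x => by positivity), integral_const_mul, hnorm m]
    _ ≤ ENNReal.ofReal ε := by
        refine ENNReal.ofReal_le_ofReal ?_
        rw [div_mul_eq_mul_div, div_le_iff₀ (by positivity)]
        nlinarith

/-- Vanishing tail of the potential energy: if for every `ε > 0` there are `R₀, s₀ > 0`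
with `F(r,t) ≤ ε t²` for a.e. `r ≥ R₀` and `0 ≤ t < s₀`, and `u_m` is a sequence of
nonnegative Schwarz symmetric functions with `‖u_m‖_{L²} = c`, then
`lim_{R→∞} sup_m ∫_{|x|>R} F(|x|, u_m(x)) dx = 0`. -/
theorem stmt_17 (n : ℕ) (hn : 0 < n) (s c : ℝ) (hs0 : 0 < s) (hs1 : s < 1) (hc : 0 < c)
    (F : ℝ → ℝ → ℝ) (hF0 : ∀ r t : ℝ, 0 ≤ r → 0 ≤ t → 0 ≤ F r t)
    (hF3 : ∀ ε : ℝ, 0 < ε → ∃ R₀ s₀ : ℝ, 0 < R₀ ∧ 0 < s₀ ∧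
      ∀ᵐ r ∂(volume.restrict (Set.Ici R₀)),
        ∀ t : ℝ, 0 ≤ t → t < s₀ → F r t ≤ ε * t ^ 2)
    (u : ℕ → EuclideanSpace ℝ (Fin n) → ℝ)
    (hu0 : ∀ m x, 0 ≤ u m x) (husym : ∀ m, SchwarzSymmetric (u m))
    (hu2 : ∀ m, MemLp (u m) 2) (hnorm : ∀ m, ∫ x, (u m x) ^ 2 = c ^ 2) :
    ∀ ε : ℝ, 0 < ε → ∃ R₁ : ℝ, ∀ R : ℝ, R₁ ≤ R → ∀ m : ℕ,
      (∫⁻ x in {x : EuclideanSpace ℝ (Fin n) | R < ‖x‖},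
        ENNReal.ofReal (F ‖x‖ (u m x))) ≤ ENNReal.ofReal ε :=
  stmt_17_general n hn c F hF3 u hu0 husym hu2 hnorm
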